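/- Theorem 2 (lower bound on ensemble size). Let γ ∈ (0,1], α ∈ (0,1), and let b ≥ 1 be an integer with b ≥ −2·ln(α)/γ². Let Y be a binomial random variable with parameters b and p = (1+γ)/2. Then P(Y ≤ b/2) ≤ α. In other words, with confidence at least 1−α, the number of branches that co-cluster two instances of the same class strictly exceeds the number of branches that separate them, provided the ensemble size is at least −2·ln(α)/γ². -/
import Mathlib


open MeasureTheory

/-- Key real-valued inequality: the lower binomial tail is at most `α`. -/
lemma randomnet_sum_bound (γ α : ℝ) (hγ0 : 0 < γ) (hγ1 : γ ≤ 1)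
    (hα0 : 0 < α) (b : ℕ) (hb : 1 ≤ b)
    (hbound : (b : ℝ) ≥ -2 * Real.log α / γ ^ 2) :
    ∑ s ∈ Finset.range (b / 2 + 1),
      (b.choose s : ℝ) * ((1 + γ) / 2) ^ s * ((1 - γ) / 2) ^ (b - s) ≤ α := by
  set p : ℝ := (1 + γ) / 2 with hpdef
  set q : ℝ := (1 - γ) / 2 with hqdef
  clear_value p q
  have hp0 : 0 < p := by rw [hpdef]; linarith
  have hq0 : 0 ≤ q := by rw [hqdef]; linarith
  -- first: exp bound on the target
  have hlog : -(γ ^ 2) * ((b : ℝ) / 2) ≤ Real.log α := by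
    have hγ2 : 0 < γ ^ 2 := by positivity
    have := (div_le_iff₀ hγ2).mp (by linarith [hbound] : -2 * Real.log α / γ ^ 2 ≤ (b : ℝ))
    nlinarith
  have hexp : Real.exp (-(γ ^ 2) * ((b : ℝ) / 2)) ≤ α := by
    calc Real.exp (-(γ ^ 2) * ((b : ℝ) / 2)) ≤ Real.exp (Real.log α) :=
          Real.exp_le_exp.mpr hlog
      _ = α := Real.exp_log hα0
  rcases eq_or_lt_of_le hγ1 with hγe | hγlt
  · -- γ = 1 : q = 0 and every term vanishes
    have hsum : ∑ s ∈ Finset.range (b / 2 + 1),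
        (b.choose s : ℝ) * p ^ s * q ^ (b - s) = 0 := by
      apply Finset.sum_eq_zero
      intro s hs
      have hs' : s ≤ b / 2 := Nat.lt_succ_iff.mp (Finset.mem_range.mp hs)
      have hlt : s < b := lt_of_le_of_lt hs' (Nat.div_lt_self (by omega) (by omega))
      have hq : q = 0 := by rw [hqdef, ← hγe]; norm_num
      rw [hq, zero_pow (by omega : b - s ≠ 0), mul_zero]
    rw [hsum]
    exact le_of_lt hα0
  · -- γ < 1
    have hq0' : 0 < q := by rw [hqdef]; linarith
    set t : ℝ := q / p with htdef
    clear_value t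
    have ht0 : 0 < t := htdef ▸ div_pos hq0' hp0
    have ht1 : t ≤ 1 := by
      rw [htdef, div_le_one hp0, hpdef, hqdef]; linarith
    have htb : (0:ℝ) < t ^ ((b : ℝ) / 2) := Real.rpow_pos_of_pos ht0 _
    -- per-term bound
    have hterm : ∀ s ∈ Finset.range (b / 2 + 1),
        (b.choose s : ℝ) * p ^ s * q ^ (b - s) ≤
          (b.choose s : ℝ) * (q ^ b / t ^ ((b : ℝ) / 2)) := by
      intro s hs
      have hs' : s ≤ b / 2 := Nat.lt_succ_iff.mp (Finset.mem_range.mp hs)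
      have hsb : (s : ℝ) ≤ (b : ℝ) / 2 := by
        have : s * 2 ≤ b := (Nat.le_div_iff_mul_le (by norm_num)).mp hs'
        have : (s : ℝ) * 2 ≤ (b : ℝ) := by exact_mod_cast this
        linarith
      have hsle : s ≤ b := le_trans hs' (Nat.div_le_self _ _)
      have hpt : p * t = q := by rw [htdef]; field_simp
      have h1 : p ^ s * q ^ (b - s) * t ^ s = q ^ b := by
        calc p ^ s * q ^ (b - s) * t ^ s = (p * t) ^ s * q ^ (b - s) := by ring
          _ = q ^ s * q ^ (b - s) := by rw [hpt]
          _ = q ^ b := by rw [← pow_add, Nat.add_sub_cancel' hsle]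
      have hkey : p ^ s * q ^ (b - s) = q ^ b / t ^ s :=
        eq_div_of_mul_eq (by positivity) h1
      have hts : t ^ ((b : ℝ) / 2) ≤ t ^ (s : ℕ) := by
        rw [← Real.rpow_natCast t s]
        exact Real.rpow_le_rpow_of_exponent_ge ht0 ht1 hsb
      have hdiv : q ^ b / t ^ s ≤ q ^ b / t ^ ((b : ℝ) / 2) := by
        apply div_le_div_of_nonneg_left (by positivity) htb hts
      have := hkey ▸ hdiv
      calc (b.choose s : ℝ) * p ^ s * q ^ (b - s)
          = (b.choose s : ℝ) * (p ^ s * q ^ (b - s)) := by ring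
        _ ≤ (b.choose s : ℝ) * (q ^ b / t ^ ((b : ℝ) / 2)) := by
            apply mul_le_mul_of_nonneg_left _ (by positivity)
            rw [hkey]; exact hdiv
    -- sum the bound
    have hchoose : ∑ s ∈ Finset.range (b / 2 + 1), (b.choose s : ℝ) ≤ 2 ^ b := by
      have h1 : ∑ s ∈ Finset.range (b / 2 + 1), b.choose s ≤
          ∑ s ∈ Finset.range (b + 1), b.choose s := by
        apply Finset.sum_le_sum_of_subset
        apply Finset.range_subset_range.mpr
        omega
      have h2 := Nat.sum_range_choose b
      have : ∑ s ∈ Finset.range (b / 2 + 1), b.choose s ≤ 2 ^ b := by omega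
      calc ∑ s ∈ Finset.range (b / 2 + 1), (b.choose s : ℝ)
          = ((∑ s ∈ Finset.range (b / 2 + 1), b.choose s : ℕ) : ℝ) := by push_cast; ring
        _ ≤ ((2 ^ b : ℕ) : ℝ) := by exact_mod_cast this
        _ = 2 ^ b := by push_cast; ring
    have hsum1 : ∑ s ∈ Finset.range (b / 2 + 1),
        (b.choose s : ℝ) * p ^ s * q ^ (b - s) ≤
          2 ^ b * (q ^ b / t ^ ((b : ℝ) / 2)) := by
      calc ∑ s ∈ Finset.range (b / 2 + 1), (b.choose s : ℝ) * p ^ s * q ^ (b - s)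
          ≤ ∑ s ∈ Finset.range (b / 2 + 1),
              (b.choose s : ℝ) * (q ^ b / t ^ ((b : ℝ) / 2)) :=
            Finset.sum_le_sum hterm
        _ = (∑ s ∈ Finset.range (b / 2 + 1), (b.choose s : ℝ)) *
              (q ^ b / t ^ ((b : ℝ) / 2)) := by rw [← Finset.sum_mul]
        _ ≤ 2 ^ b * (q ^ b / t ^ ((b : ℝ) / 2)) := by
            apply mul_le_mul_of_nonneg_right hchoose (by positivity)
    -- identify the bound with (1 - γ²)^(b/2)
    have h2q : (0:ℝ) ≤ 2 * q := by linarith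
    have hident : 2 ^ b * (q ^ b / t ^ ((b : ℝ) / 2)) =
        (4 * p * q) ^ ((b : ℝ) / 2) := by
      have h4pq : 4 * p * q = (2 * q) ^ 2 / t := by
        rw [htdef]; field_simp; ring
      rw [h4pq, Real.div_rpow (by positivity) (le_of_lt ht0)]
      have : ((2 * q) ^ 2 : ℝ) ^ ((b : ℝ) / 2) = (2 * q) ^ b := by
        rw [← Real.rpow_natCast (2 * q) 2, ← Real.rpow_mul h2q]
        have he : ((2 : ℕ) : ℝ) * ((b : ℝ) / 2) = ((b : ℕ) : ℝ) := by push_cast; ring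
        rw [he, Real.rpow_natCast]
      rw [this, mul_pow]
      ring
    have h4pq1 : 4 * p * q = 1 - γ ^ 2 := by rw [hpdef, hqdef]; ring
    have hfinal : (4 * p * q) ^ ((b : ℝ) / 2) ≤ α := by
      have hle : 4 * p * q ≤ Real.exp (-(γ ^ 2)) := by
        rw [h4pq1]
        have := Real.add_one_le_exp (-(γ ^ 2))
        linarith
      calc (4 * p * q) ^ ((b : ℝ) / 2)
          ≤ Real.exp (-(γ ^ 2)) ^ ((b : ℝ) / 2) :=
            Real.rpow_le_rpow (by positivity) hle (by positivity)
        _ = Real.exp (-(γ ^ 2) * ((b : ℝ) / 2)) := (Real.exp_mul _ _).symm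
        _ ≤ α := hexp
    calc ∑ s ∈ Finset.range (b / 2 + 1), (b.choose s : ℝ) * p ^ s * q ^ (b - s)
        ≤ 2 ^ b * (q ^ b / t ^ ((b : ℝ) / 2)) := hsum1
      _ = (4 * p * q) ^ ((b : ℝ) / 2) := hident
      _ ≤ α := hfinal

/-- Theorem 2 of RandomNet (lower bound on ensemble size): if the ensemble size `b`
satisfies `b ≥ −2·ln(α)/γ²` and `Y` is binomial with parameters `b` and
`p = (1+γ)/2`, then `P(Y ≤ b/2) ≤ α`, i.e. with confidence at least `1−α` the
majority of branches co-cluster the two same-class instances. -/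
theorem randomnet_ensemble_size_lower_bound {Ω : Type*} [MeasurableSpace Ω]
    (μ : Measure Ω) [IsProbabilityMeasure μ] (γ : ℝ) (hγ0 : 0 < γ) (hγ1 : γ ≤ 1)
    (α : ℝ) (hα0 : 0 < α) (hα1 : α < 1) (b : ℕ) (hb : 1 ≤ b)
    (hbound : (b : ℝ) ≥ -2 * Real.log α / γ ^ 2)
    (p : ℝ) (hp : p = (1 + γ) / 2) (Y : Ω → ℕ) (hY : Measurable Y)
    (hbinom : ∀ s : ℕ,
      μ {ω | Y ω = s} = ENNReal.ofReal ((b.choose s : ℝ) * p ^ s * (1 - p) ^ (b - s))) :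
    μ {ω | (Y ω : ℝ) ≤ (b : ℝ) / 2} ≤ ENNReal.ofReal α := by
  have hq : 1 - p = (1 - γ) / 2 := by rw [hp]; ring
  -- rewrite the event as a finite union
  have hset : {ω | (Y ω : ℝ) ≤ (b : ℝ) / 2} =
      ⋃ s ∈ Finset.range (b / 2 + 1), {ω | Y ω = s} := by
    ext ω
    simp only [Set.mem_setOf_eq, Set.mem_iUnion, Finset.mem_range, Nat.lt_succ_iff]
    constructor
    · intro h
      refine ⟨Y ω, ?_, rfl⟩
      apply (Nat.le_div_iff_mul_le (by norm_num)).mpr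
      have : (Y ω : ℝ) * 2 ≤ (b : ℝ) := by linarith
      exact_mod_cast this
    · rintro ⟨s, hs, rfl⟩
      have h1 : Y ω * 2 ≤ b := (Nat.le_div_iff_mul_le (by norm_num)).mp hs
      have h2 : ((Y ω : ℕ) : ℝ) * 2 ≤ (b : ℝ) := by exact_mod_cast h1
      linarith
  rw [hset]
  calc μ (⋃ s ∈ Finset.range (b / 2 + 1), {ω | Y ω = s})
      ≤ ∑ s ∈ Finset.range (b / 2 + 1), μ {ω | Y ω = s} :=
        measure_biUnion_finset_le _ _
    _ = ∑ s ∈ Finset.range (b / 2 + 1),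
          ENNReal.ofReal ((b.choose s : ℝ) * p ^ s * (1 - p) ^ (b - s)) := by
        exact Finset.sum_congr rfl fun s _ => hbinom s
    _ = ENNReal.ofReal (∑ s ∈ Finset.range (b / 2 + 1),
          (b.choose s : ℝ) * p ^ s * (1 - p) ^ (b - s)) := by
        rw [ENNReal.ofReal_sum_of_nonneg]
        intro s _
        have hp0 : 0 ≤ p := by rw [hp]; linarith
        have hq0 : 0 ≤ 1 - p := by rw [hq]; linarith
        positivity
    _ ≤ ENNReal.ofReal α := by
        apply ENNReal.ofReal_le_ofReal
        have := randomnet_sum_bound γ α hγ0 hγ1 hα0 b hb hbound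
        rw [hq, hp]
        exact this
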